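/- There exists a finite instance with two groups and two solutions where the exact leximax solution and an element-wise-close alternative diverge: with utilities u(S_1,G_1) = 0, u(S_1,G_2) = 1, u(S_2,G_1) = u(S_2,G_2) = 1/100, the unique leximax solution is S_2 (its sorted utility vector (1/100, 1/100) is lexicographically greater than (0,1)), yet S_1 is ε-tradeoff approximate leximax for any ε ≥ 1/100. -/

import Mathlib

/-! The two utility vectors are already nondecreasing, so they are their own sorted vectors:
`(0, 1)` and `(1/100, 1/100)`. The second wins at the first coordinate. For `S₁` the tradeoff
condition holds vacuously once `ε ≥ 1/100`: no sorted vector exceeds `(0, 1)` by more than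
`1/100` in any coordinate. -/

open scoped Classical

/-- The vector of the values of `w` sorted in nondecreasing order;
`sortedVec m w i` is the `i`-th smallest value of `w`. -/
noncomputable def sortedVec (m : ℕ) (w : Fin m → ℝ) : Fin m → ℝ :=
  fun i => ((Finset.univ.val.map w).sort (· ≤ ·)).get ⟨i.1, by simp⟩

/-- Lexicographic order on `ℝ^m`: `lexLE m v u` means `v ⪯ u`, i.e. either `v = u`
or at the first coordinate where they differ, `u` is strictly larger. -/
def lexLE (m : ℕ) (v u : Fin m → ℝ) : Prop :=
  v = u ∨ ∃ i : Fin m, (∀ j < i, v j = u j) ∧ v i < u i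

/-- The recursively defined sets `S_i^α`: `S_0^α = S` and `S_i^α` keeps those solutions of
`S_{i-1}^α` whose `i`-th smallest group utility is within `α_i` of the maximum `i`-th smallest
group utility over `S_{i-1}^α` (expressed as: at least every other value minus `α_i`). -/
noncomputable def recSets {σ : Type*} (m : ℕ) (S : Finset σ)
    (u : σ → Fin m → ℝ) (α : Fin m → ℝ) : ℕ → Finset σ
  | 0 => S
  | (i+1) =>
    if h : i < m then
      (recSets m S u α i).filter (fun s => ∀ t ∈ recSets m S u α i,
        sortedVec m (u s) ⟨i, h⟩ ≥ sortedVec m (u t) ⟨i, h⟩ - α ⟨i, h⟩)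
    else recSets m S u α i


/-- The instance of Example 1: two groups, two solutions. -/
noncomputable def exU18 : Fin 2 → Fin 2 → ℝ := ![![0, 1], ![1/100, 1/100]]

theorem sortedVec_eq_self_of_monotone {m : ℕ} {w : Fin m → ℝ} (hw : Monotone w) :
    sortedVec m w = w := by
  have hsort : (Finset.univ.val.map w).sort (· ≤ ·) = List.ofFn w := by
    rw [Fin.univ_val_map, Multiset.coe_sort]
    exact List.mergeSort_eq_self _ hw.sortedLE_ofFn.pairwise
  funext i
  simp only [sortedVec, List.get_of_eq hsort, List.get_ofFn]
  rfl

theorem lexLE_of_lt_zero {m : ℕ} {v u : Fin (m + 1) → ℝ} (h : v 0 < u 0) : lexLE (m + 1) v u :=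
  Or.inr ⟨0, fun j hj => absurd hj (Fin.not_lt_zero j), h⟩

theorem sortedVec_exU18_zero : sortedVec 2 (exU18 0) = ![0, 1] :=
  sortedVec_eq_self_of_monotone (Fin.monotone_iff_le_succ.2 fun i => by
    fin_cases i; norm_num [exU18])

theorem sortedVec_exU18_one : sortedVec 2 (exU18 1) = ![1/100, 1/100] :=
  sortedVec_eq_self_of_monotone (Fin.monotone_iff_le_succ.2 fun i => by
    fin_cases i; norm_num [exU18])

/-- Example 1: solution `S₂` (index 1) is the unique leximax solution, its sorted vector
`(1/100, 1/100)` being strictly lexicographically greater than `(0, 1)`; yet `S₁`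
(index 0) is ε-tradeoff approximate leximax for every ε ≥ 1/100. -/
theorem leximax_sensitivity_example :
    (∀ s : Fin 2, lexLE 2 (sortedVec 2 (exU18 s)) (sortedVec 2 (exU18 1))) ∧
    sortedVec 2 (exU18 0) ≠ sortedVec 2 (exU18 1) ∧
    (∀ ε : ℝ, 1/100 ≤ ε → ∀ s' : Fin 2, ∀ i : Fin 2,
      sortedVec 2 (exU18 s') i > sortedVec 2 (exU18 0) i + ε →
      ∃ j < i, sortedVec 2 (exU18 0) j > sortedVec 2 (exU18 s') j) := by
  have h0 := sortedVec_exU18_zero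
  have h1 := sortedVec_exU18_one
  refine ⟨fun s => ?_, fun h => ?_, fun ε hε s' i hi => ?_⟩
  · fin_cases s
    · exact lexLE_of_lt_zero (by norm_num [h0, h1])
    · exact Or.inl rfl
  · have := congrFun h 0
    norm_num [h0, h1] at this
  · exfalso
    fin_cases s' <;> fin_cases i <;> norm_num [h0, h1] at hi <;> linarith
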